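/- The spectrum of the adjacency operator L on the rooted binary tree equals the interval [−2√2, 2√2]. -/

import Mathlib

/-!
`L` is self-adjoint because `TreeAdj` is symmetric, and `‖L‖ ≤ 2√2`: by Cauchy–Schwarz,
`|Lφ(v)|² ≤ 4|φ(false :: v)|² + 4|φ(true :: v)|² + 2|φ(parent v)|²`, and summing over `v` gives at
most `4‖φ‖² + 2 · 2‖φ‖²` since every vertex is the parent of two others. Hence
`σ(L) ⊆ [-2√2, 2√2]`.

Conversely, `L` maps the radial function `v ↦ 2^(-|v|/2) sin((|v| + 1)θ)` to `2√2 cos θ` times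
itself. Its truncations `Φ_N` at depth `N` satisfy `‖Φ_N‖² = ∑_{n ≤ N} sin²((n + 1)θ) → ∞` when
`sin θ ≠ 0`, while `(L - 2√2 cos θ) Φ_N` lives on the levels `N` and `N + 1` and has norm at most
`2`. So `2√2 cos θ` lies in the spectrum whenever `sin θ ≠ 0`, and so does the closure
`[-2√2, 2√2]` of these values.
-/

/-- Adjacency on the binary tree V = List Bool (root [], children of v are b::v). -/
def TreeAdj (v w : List Bool) : Prop := (∃ b, w = b :: v) ∨ (∃ b, v = b :: w)

open Filter Topology Finset Real
open scoped lp

theorem lp.hasSum_norm_sq {ι : Type*} {E : ι → Type*} [∀ i, NormedAddCommGroup (E i)]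
    (f : lp E 2) : HasSum (fun i => ‖f i‖ ^ 2) (‖f‖ ^ 2) := by
  simpa [Real.rpow_two] using lp.hasSum_norm (p := 2) (by norm_num) f

theorem memℓp_two_of_summable_norm_sq {ι : Type*} {E : ι → Type*} [∀ i, NormedAddCommGroup (E i)]
    {f : ∀ i, E i} (hf : Summable fun i => ‖f i‖ ^ 2) : Memℓp f 2 :=
  memℓp_gen (by simpa [Real.rpow_two] using hf)

theorem norm_add_add_sq_le {E : Type*} [SeminormedAddCommGroup E] (a b c : E) :
    ‖a + b + c‖ ^ 2 ≤ 4 * ‖a‖ ^ 2 + 4 * ‖b‖ ^ 2 + 2 * ‖c‖ ^ 2 := by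
  have : ‖a + b + c‖ ≤ ‖a‖ + ‖b‖ + ‖c‖ := norm_add₃_le
  nlinarith [norm_nonneg (a + b + c), sq_nonneg (‖a‖ - ‖b‖), sq_nonneg (‖a‖ + ‖b‖ - ‖c‖)]

theorem ContinuousLinearMap.isSelfAdjoint_of_apply_eq_tsum {𝕜 ι : Type*} [RCLike 𝕜]
    {R : ι → ι → Prop} (hR : ∀ v w, R v w → R w v) (L : ℓ²(ι, 𝕜) →L[𝕜] ℓ²(ι, 𝕜))
    (hL : ∀ φ v, L φ v = ∑' w : {w // R v w}, φ w) : IsSelfAdjoint L := by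
  classical
  have hsingle : ∀ v w, L (lp.single 2 v 1) w = if R v w then 1 else 0 := by
    intro v w
    rw [hL]
    by_cases h : R w v
    · rw [tsum_eq_single ⟨v, h⟩ fun u hu => lp.single_apply_ne 2 v 1 (Subtype.coe_ne_coe.mpr hu),
        lp.single_apply_self, if_pos (hR _ _ h)]
    · rw [if_neg fun h' => h (hR _ _ h')]
      have hzero (u : {u // R w u}) : lp.single (E := fun _ : ι => 𝕜) 2 v 1 u = 0 :=
        lp.single_apply_ne 2 v 1 fun e => h (e ▸ u.2)
      simp only [hzero, tsum_zero]
  rw [ContinuousLinearMap.isSelfAdjoint_iff']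
  ext ψ v
  calc (adjoint L ψ) v = inner 𝕜 (lp.single 2 v 1) (adjoint L ψ) := by simp [lp.inner_single_left]
    _ = inner 𝕜 (L (lp.single 2 v 1)) ψ := adjoint_inner_right L _ ψ
    _ = ∑' w, {w | R v w}.indicator ψ w := by
      rw [lp.inner_eq_tsum]
      refine tsum_congr fun w => ?_
      by_cases h : R v w <;> simp [hsingle, h]
    _ = L ψ v := by rw [hL]; exact (_root_.tsum_subtype {w | R v w} ψ).symm

theorem ContinuousLinearMap.mem_spectrum_of_tendsto_norm {𝕜 E : Type*} [NontriviallyNormedField 𝕜]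
    [NormedAddCommGroup E] [NormedSpace 𝕜 E] {T : E →L[𝕜] E} {μ : 𝕜} {x : ℕ → E} {C : ℝ}
    (hx : Tendsto (fun n => ‖x n‖) atTop atTop) (hT : ∀ n, ‖T (x n) - μ • x n‖ ≤ C) :
    μ ∈ spectrum 𝕜 T := by
  rintro ⟨u, hu⟩
  set S : E →L[𝕜] E := ↑u⁻¹
  obtain ⟨n, hn⟩ := (hx.eventually_gt_atTop (‖S‖ * C)).exists
  have hx_eq : x n = S (μ • x n - T (x n)) := by
    have hux : (u : E →L[𝕜] E) (x n) = μ • x n - T (x n) := by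
      simp [hu, Algebra.algebraMap_eq_smul_one]
    rw [← hux, ← mul_apply_eq_comp, u.inv_mul, one_apply_eq_self]
  refine hn.not_ge ?_
  calc ‖x n‖ = ‖S (μ • x n - T (x n))‖ := congrArg _ hx_eq
    _ ≤ ‖S‖ * ‖μ • x n - T (x n)‖ := le_opNorm _ _
    _ ≤ ‖S‖ * C := by rw [norm_sub_rev]; gcongr; exact hT n

theorem IsSelfAdjoint.spectrum_subset_image_Icc {E : Type*} [NormedAddCommGroup E]
    [InnerProductSpace ℂ E] [CompleteSpace E] {T : E →L[ℂ] E} (hT : IsSelfAdjoint T) :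
    spectrum ℂ T ⊆ Complex.ofReal '' Set.Icc (-‖T‖) ‖T‖ := by
  intro z hz
  have hre := hT.mem_spectrum_eq_re hz
  have hnorm : ‖z‖ ≤ ‖T‖ := by
    have := spectrum.subset_closedBall_norm_mul T hz
    rw [Metric.mem_closedBall, dist_zero_right] at this
    exact this.trans (mul_le_of_le_one_right (norm_nonneg T) ContinuousLinearMap.norm_id_le)
  rw [hre, Complex.norm_real, Real.norm_eq_abs] at hnorm
  exact ⟨z.re, abs_le.mp hnorm, hre.symm⟩

theorem Real.sin_sq_le_two_mul_sin_sq_add (θ a : ℝ) :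
    sin θ ^ 2 ≤ 2 * (sin a ^ 2 + sin (a + θ) ^ 2) := by
  have hθ : sin θ = sin (a + θ) * cos a - cos (a + θ) * sin a := by
    rw [← Real.sin_sub]; ring_nf
  have habs : |sin θ| ≤ |sin (a + θ)| + |sin a| := by
    rw [hθ]
    refine (abs_sub _ _).trans (add_le_add ?_ ?_) <;> rw [abs_mul]
    · exact mul_le_of_le_one_right (abs_nonneg _) (abs_cos_le_one a)
    · exact mul_le_of_le_one_left (abs_nonneg _) (abs_cos_le_one _)
  have := pow_le_pow_left₀ (abs_nonneg _) habs 2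
  simp only [sq_abs] at this
  nlinarith [sq_abs (sin a), sq_abs (sin (a + θ)), sq_nonneg (|sin (a + θ)| - |sin a|)]

theorem Real.tendsto_sum_sin_sq_atTop {θ : ℝ} (hθ : sin θ ≠ 0) :
    Tendsto (fun N => ∑ n ∈ range N, sin ((n + 1) * θ) ^ 2) atTop atTop := by
  have hpairs (M : ℕ) : M * (sin θ ^ 2 / 2) ≤ ∑ n ∈ range (2 * M), sin ((n + 1) * θ) ^ 2 := by
    induction M with
    | zero => simp
    | succ M ih =>
      have := sin_sq_le_two_mul_sin_sq_add θ ((2 * M + 1) * θ)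
      rw [show 2 * (M + 1) = 2 * M + 1 + 1 by ring, sum_range_succ, sum_range_succ]
      have h₁ : ((↑(2 * M) : ℝ) + 1) * θ = (2 * M + 1) * θ := by push_cast; ring
      have h₂ : ((↑(2 * M + 1) : ℝ) + 1) * θ = (2 * M + 1) * θ + θ := by push_cast; ring
      rw [h₁, h₂]
      push_cast
      linarith
  refine tendsto_atTop_atTop_of_monotone
    (monotone_nat_of_le_succ fun N => by simp [sum_range_succ, sq_nonneg]) fun b => ?_
  obtain ⟨M, hM⟩ := exists_nat_ge (b / (sin θ ^ 2 / 2))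
  have hpos : 0 < sin θ ^ 2 / 2 := by positivity
  exact ⟨2 * M, le_trans (by rwa [div_le_iff₀ hpos] at hM) (hpairs M)⟩

theorem Real.exists_sin_ne_zero_mul_cos_eq {r x : ℝ} (hx : x ∈ Set.Ioo (-r) r) :
    ∃ θ, sin θ ≠ 0 ∧ r * cos θ = x := by
  obtain ⟨h₁, h₂⟩ := hx
  have hr : 0 < r := by linarith
  have hlo : -1 < x / r := by rwa [lt_div_iff₀ hr, neg_one_mul]
  have hhi : x / r < 1 := by rwa [div_lt_one hr]
  refine ⟨arccos (x / r), ?_, ?_⟩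
  · rw [sin_arccos]
    exact (sqrt_pos.mpr (by nlinarith)).ne'
  · rw [cos_arccos hlo.le hhi.le]
    field_simp

namespace BinaryTree

def consEquiv : Unit ⊕ (List Bool ⊕ List Bool) ≃ List Bool where
  toFun := Sum.elim (fun _ => []) (Sum.elim (List.cons false) (List.cons true))
  invFun
    | [] => .inl ()
    | false :: v => .inr (.inl v)
    | true :: v => .inr (.inr v)
  left_inv := by rintro (_ | v | v) <;> rfl
  right_inv := by rintro (_ | ⟨_ | _, v⟩) <;> rfl

def atParent {E : Type*} [Zero E] (φ : List Bool → E) : List Bool → E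
  | [] => 0
  | _ :: u => φ u

section HasSum

variable {E : Type*} [AddCommMonoid E] [TopologicalSpace E] [ContinuousAdd E]

theorem hasSum_of_hasSum_cons {f : List Bool → E} {a₀ a₁ : E}
    (h₀ : HasSum (fun v => f (false :: v)) a₀) (h₁ : HasSum (fun v => f (true :: v)) a₁) :
    HasSum f (f [] + (a₀ + a₁)) :=
  consEquiv.hasSum_iff.mp ((hasSum_unique (fun _ : Unit => f [])).sum (h₀.sum h₁))

theorem hasSum_atParent {f : List Bool → E} {a : E} (hf : HasSum f a) :
    HasSum (atParent f) (a + a) := by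
  simpa [atParent] using hasSum_of_hasSum_cons (f := atParent f) hf hf

theorem hasSum_length {F : ℕ → E} {N : ℕ} (hF : ∀ n, N ≤ n → F n = 0) :
    HasSum (fun v : List Bool => F v.length) (∑ n ∈ range N, 2 ^ n • F n) := by
  induction N generalizing F with
  | zero => simp [hF _ (Nat.zero_le _), hasSum_zero]
  | succ N ih =>
    have h := ih (F := fun n => F (n + 1)) fun n hn => hF _ (by omega)
    convert hasSum_of_hasSum_cons (f := fun v : List Bool => F v.length) h h using 1
    rw [sum_range_succ', ← two_nsmul, ← sum_nsmul]
    simp [pow_succ, mul_nsmul, add_comm]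

end HasSum

theorem tsum_treeAdj {E : Type*} [AddCommMonoid E] [TopologicalSpace E] (φ : List Bool → E)
    (v : List Bool) :
    ∑' w : {w // TreeAdj v w}, φ w = φ (false :: v) + φ (true :: v) + atParent φ v := by
  have tsum_eq_sum (s : Finset (List Bool)) (hs : ∀ w, TreeAdj v w ↔ w ∈ s) :
      ∑' w : {w // TreeAdj v w}, φ w = ∑ w ∈ s, φ w := by
    rw [← Finset.tsum_subtype]
    exact (Equiv.subtypeEquivRight hs).tsum_eq fun w : {w // w ∈ s} => φ w
  have length_ne (w : List Bool) (b c : Bool) : b :: c :: w ≠ w := fun h =>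
    absurd (congrArg List.length h) (by simp; omega)
  cases v with
  | nil =>
    rw [tsum_eq_sum {[false], [true]} (by simp [TreeAdj, Bool.exists_bool, eq_comm])]
    simp [atParent]
  | cons c u =>
    rw [tsum_eq_sum {false :: c :: u, true :: c :: u, u}
      (by simp [TreeAdj, Bool.exists_bool, eq_comm, or_assoc])]
    simp [atParent, length_ne, add_assoc]

theorem opNorm_le_two_mul_sqrt_two (L : ℓ²(List Bool, ℂ) →L[ℂ] ℓ²(List Bool, ℂ))
    (hL : ∀ φ v, L φ v = φ (false :: v) + φ (true :: v) + atParent φ v) :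
    ‖L‖ ≤ 2 * √2 := by
  refine L.opNorm_le_bound (by positivity) fun φ => le_of_pow_le_pow_left₀ two_ne_zero
    (by positivity) ?_
  set F := fun v => ‖φ v‖ ^ 2
  have hF : HasSum F (‖φ‖ ^ 2) := lp.hasSum_norm_sq φ
  obtain ⟨a₀, h₀⟩ := hF.summable.comp_injective (List.cons_injective (a := false))
  obtain ⟨a₁, h₁⟩ := hF.summable.comp_injective (List.cons_injective (a := true))
  have hsplit : ‖φ‖ ^ 2 = F [] + (a₀ + a₁) := hF.unique (hasSum_of_hasSum_cons h₀ h₁)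
  have hbound := ((h₀.mul_left 4).add (h₁.mul_left 4)).add ((hasSum_atParent hF).mul_left 2)
  have hLφ : ‖L φ‖ ^ 2 ≤ 4 * a₀ + 4 * a₁ + 2 * (‖φ‖ ^ 2 + ‖φ‖ ^ 2) := by
    refine hasSum_le (fun v => ?_) (lp.hasSum_norm_sq (L φ)) hbound
    calc ‖L φ v‖ ^ 2 ≤ 4 * F (false :: v) + 4 * F (true :: v) + 2 * ‖atParent φ v‖ ^ 2 := by
          rw [hL]; exact norm_add_add_sq_le _ _ _
      _ = _ := by cases v <;> simp [atParent, F]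
  have hF0 : 0 ≤ F [] := by positivity
  calc ‖L φ‖ ^ 2 ≤ 8 * ‖φ‖ ^ 2 := by linarith
    _ = (2 * √2 * ‖φ‖) ^ 2 := by rw [mul_pow, mul_pow, Real.sq_sqrt zero_le_two]; ring

def radialAdj {R : Type*} [Semiring R] (f : ℕ → R) : ℕ → R
  | 0 => 2 * f 1
  | n + 1 => 2 * f (n + 2) + f n

theorem map_radialAdj {R S : Type*} [Semiring R] [Semiring S] (g : R →+* S) (f : ℕ → R) (n : ℕ) :
    g (radialAdj f n) = radialAdj (g ∘ f) n := by
  cases n <;> simp [radialAdj, map_ofNat]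

def truncAt {R : Type*} [Zero R] (N : ℕ) (f : ℕ → R) (n : ℕ) : R := if n ≤ N then f n else 0

theorem radialAdj_truncAt_sub {R : Type*} [CommRing R] {u : ℕ → R} {μ : R}
    (hu : ∀ n, radialAdj u n = μ * u n) (N n : ℕ) :
    radialAdj (truncAt N u) n - μ * truncAt N u n =
      if n = N then -(2 * u (N + 1)) else if n = N + 1 then u N else 0 := by
  have := hu n
  cases n <;> simp only [radialAdj, truncAt, Nat.add_right_cancel_iff] at this ⊢ <;>
    split_ifs <;> subst_vars <;> first | contradiction | omega | linear_combination this | ring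

theorem norm_sq_eq_sum_of_radial {E : Type*} [NormedAddCommGroup E] {φ : ℓ²(List Bool, E)}
    {f : ℕ → E} {N : ℕ} (hφ : ∀ v, φ v = f v.length) (hf : ∀ n, N ≤ n → f n = 0) :
    ‖φ‖ ^ 2 = ∑ n ∈ range N, 2 ^ n * ‖f n‖ ^ 2 := by
  refine (lp.hasSum_norm_sq φ).unique ?_
  simpa [hφ, nsmul_eq_mul] using hasSum_length (F := fun n => ‖f n‖ ^ 2) (by simp +contextual [hf])

def radialVec {E : Type*} [NormedAddCommGroup E] (N : ℕ) (f : ℕ → E) : ℓ²(List Bool, E) :=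
  ⟨fun v => truncAt N f v.length, memℓp_two_of_summable_norm_sq
    (hasSum_length (F := fun n => ‖truncAt N f n‖ ^ 2) (N := N + 1) fun n hn => by
      simp [truncAt]; omega).summable⟩

theorem radialVec_apply {E : Type*} [NormedAddCommGroup E] (N : ℕ) (f : ℕ → E) (v : List Bool) :
    radialVec N f v = truncAt N f v.length :=
  rfl

theorem norm_sq_radialVec {E : Type*} [NormedAddCommGroup E] (N : ℕ) (f : ℕ → E) :
    ‖radialVec N f‖ ^ 2 = ∑ n ∈ range (N + 1), 2 ^ n * ‖f n‖ ^ 2 := by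
  rw [norm_sq_eq_sum_of_radial (N := N + 1) (radialVec_apply N f) fun n hn => by
    simp [truncAt]; omega]
  refine sum_congr rfl fun n hn => ?_
  rw [truncAt, if_pos (Nat.lt_succ_iff.mp (mem_range.mp hn))]

theorem apply_eq_radialAdj (L : ℓ²(List Bool, ℂ) →L[ℂ] ℓ²(List Bool, ℂ))
    (hL : ∀ φ v, L φ v = φ (false :: v) + φ (true :: v) + atParent φ v) {φ : ℓ²(List Bool, ℂ)}
    {f : ℕ → ℂ} (hφ : ∀ v, φ v = f v.length) (v : List Bool) :
    L φ v = radialAdj f v.length := by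
  rw [hL]
  cases v <;> simp [hφ, atParent, radialAdj] <;> ring

theorem norm_sq_apply_radialVec_sub (L : ℓ²(List Bool, ℂ) →L[ℂ] ℓ²(List Bool, ℂ))
    (hL : ∀ φ v, L φ v = φ (false :: v) + φ (true :: v) + atParent φ v) {u : ℕ → ℂ} {μ : ℂ}
    (hu : ∀ n, radialAdj u n = μ * u n) (N : ℕ) :
    ‖L (radialVec N u) - μ • radialVec N u‖ ^ 2 =
      2 ^ N * ‖2 * u (N + 1)‖ ^ 2 + 2 ^ (N + 1) * ‖u N‖ ^ 2 := by
  set e : ℕ → ℂ := fun n => if n = N then -(2 * u (N + 1)) else if n = N + 1 then u N else 0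
  have he (v : List Bool) : (L (radialVec N u) - μ • radialVec N u) v = e v.length := by
    rw [lp.coeFn_sub, lp.coeFn_smul, Pi.sub_apply, Pi.smul_apply, smul_eq_mul,
      apply_eq_radialAdj L hL (radialVec_apply N u)]
    exact radialAdj_truncAt_sub hu N v.length
  have he_zero (n : ℕ) (hn : n ≠ N) (hn' : n ≠ N + 1) : e n = 0 := by simp [e, hn, hn']
  rw [norm_sq_eq_sum_of_radial he (N := N + 2) fun n hn => he_zero n (by omega) (by omega),
    sum_range_succ, sum_range_succ, sum_eq_zero fun n hn => by
      rw [he_zero n (by simp at hn; omega) (by simp at hn; omega), norm_zero]; ring]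
  simp [e]

noncomputable def weyl (θ : ℝ) (n : ℕ) : ℝ := sin ((n + 1) * θ) / √2 ^ n

theorem radialAdj_weyl (θ : ℝ) (n : ℕ) :
    radialAdj (weyl θ) n = 2 * √2 * cos θ * weyl θ n := by
  have hsqrt : √2 * √2 = 2 := mul_self_sqrt zero_le_two
  cases n with
  | zero =>
    simp only [radialAdj, weyl, Nat.cast_zero, Nat.cast_one, one_add_one_eq_two, zero_add, one_mul,
      pow_zero, pow_one, div_one, sin_two_mul]
    field_simp
    linear_combination -(sin θ * cos θ) * hsqrt
  | succ m =>
    have hsum : sin ((m + 2) * θ + θ) + sin ((m + 2) * θ - θ) = 2 * sin ((m + 2) * θ) * cos θ := by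
      rw [sin_add, sin_sub]; ring
    simp only [radialAdj, weyl]
    push_cast
    rw [show ((m : ℝ) + 2 + 1) * θ = (m + 2) * θ + θ by ring,
      show ((m : ℝ) + 1) * θ = (m + 2) * θ - θ by ring,
      show ((m : ℝ) + 1 + 1) * θ = (m + 2) * θ by ring, pow_succ, pow_succ, mul_assoc, hsqrt]
    generalize (m + 2) * θ = A at hsum ⊢
    field_simp
    linear_combination hsum

theorem two_pow_mul_weyl_sq (θ : ℝ) (n : ℕ) : 2 ^ n * weyl θ n ^ 2 = sin ((n + 1) * θ) ^ 2 := by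
  rw [weyl, div_pow, ← pow_mul, mul_comm n, pow_mul, Real.sq_sqrt zero_le_two]
  field_simp

theorem mem_spectrum_of_sin_ne_zero (L : ℓ²(List Bool, ℂ) →L[ℂ] ℓ²(List Bool, ℂ))
    (hL : ∀ φ v, L φ v = φ (false :: v) + φ (true :: v) + atParent φ v) {θ : ℝ}
    (hθ : sin θ ≠ 0) : ((2 * √2 * cos θ : ℝ) : ℂ) ∈ spectrum ℂ L := by
  set u : ℕ → ℂ := Complex.ofRealHom ∘ weyl θ
  have hu (n : ℕ) : radialAdj u n = ((2 * √2 * cos θ : ℝ) : ℂ) * u n := by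
    simp [u, ← map_radialAdj, radialAdj_weyl]
  have hnorm_u (n : ℕ) : 2 ^ n * ‖u n‖ ^ 2 = sin ((n + 1) * θ) ^ 2 := by
    simp [u, Complex.norm_real, two_pow_mul_weyl_sq]
  refine ContinuousLinearMap.mem_spectrum_of_tendsto_norm (x := fun N => radialVec N u) (C := 2)
    ?_ fun N => le_of_pow_le_pow_left₀ two_ne_zero zero_le_two ?_
  · have hnorm (N : ℕ) : ‖radialVec N u‖ = √(∑ n ∈ range (N + 1), sin ((n + 1) * θ) ^ 2) := by
      rw [← sum_congr rfl fun n _ => hnorm_u n, ← norm_sq_radialVec, sqrt_sq (norm_nonneg _)]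
    simp only [hnorm]
    exact tendsto_sqrt_atTop.comp ((tendsto_sum_sin_sq_atTop hθ).comp (tendsto_add_atTop_nat 1))
  · calc _ = 2 * (2 ^ (N + 1) * ‖u (N + 1)‖ ^ 2) + 2 * (2 ^ N * ‖u N‖ ^ 2) := by
          rw [norm_sq_apply_radialVec_sub L hL hu, norm_mul, pow_succ]; norm_num; ring
      _ = 2 * sin ((N + 1 + 1) * θ) ^ 2 + 2 * sin ((N + 1) * θ) ^ 2 := by
          rw [hnorm_u, hnorm_u]; push_cast; ring
      _ ≤ 2 ^ 2 := by nlinarith [sin_sq_le_one ((N + 1 + 1) * θ), sin_sq_le_one ((N + 1) * θ)]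

theorem image_Icc_subset_spectrum (L : ℓ²(List Bool, ℂ) →L[ℂ] ℓ²(List Bool, ℂ))
    (hL : ∀ φ v, L φ v = φ (false :: v) + φ (true :: v) + atParent φ v) :
    Complex.ofReal '' Set.Icc (-(2 * √2)) (2 * √2) ⊆ spectrum ℂ L := by
  have hIoo : Complex.ofReal '' Set.Ioo (-(2 * √2)) (2 * √2) ⊆ spectrum ℂ L := by
    rintro _ ⟨x, hx, rfl⟩
    obtain ⟨θ, hθ, rfl⟩ := Real.exists_sin_ne_zero_mul_cos_eq hx
    exact mem_spectrum_of_sin_ne_zero L hL hθ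
  rw [← closure_Ioo (neg_lt_self (by positivity)).ne,
    ← Complex.isometry_ofReal.isClosedEmbedding.closure_image_eq]
  exact closure_minimal hIoo (spectrum.isClosed L)

end BinaryTree

theorem spectrum_L
    (L : lp (fun _ : List Bool => ℂ) 2 →L[ℂ] lp (fun _ : List Bool => ℂ) 2)
    (hL : ∀ (φ : lp (fun _ : List Bool => ℂ) 2) (v : List Bool),
      L φ v = ∑' w : {w : List Bool // TreeAdj v w}, φ w) :
    spectrum ℂ L = Complex.ofReal '' Set.Icc (-(2 * Real.sqrt 2)) (2 * Real.sqrt 2) := by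
  have hL' (φ : ℓ²(List Bool, ℂ)) (v : List Bool) :
      L φ v = φ (false :: v) + φ (true :: v) + BinaryTree.atParent φ v :=
    (hL φ v).trans (BinaryTree.tsum_treeAdj φ v)
  have hnorm := BinaryTree.opNorm_le_two_mul_sqrt_two L hL'
  refine subset_antisymm ?_ (BinaryTree.image_Icc_subset_spectrum L hL')
  exact (L.isSelfAdjoint_of_apply_eq_tsum (fun _ _ => Or.symm) hL).spectrum_subset_image_Icc.trans
    (Set.image_mono (Set.Icc_subset_Icc (neg_le_neg hnorm) hnorm))
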